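/- arXiv:1212.0070 — 2 statements merged into one kernel-verified Lean document; each statement's English description precedes it below -/
import Mathlib

section
/- Let $N$ be a closed oriented 3-manifold with contact forms $\tau$ and $\tau'$ having Reeb fields $A$ and $\phi A$ respectively (where $\phi > 0$ is smooth), and suppose $\tau' \wedge d\tau' = -c\,\phi^{-1}\,\tau \wedge d\tau$ for a constant $c > 0$. Then $d\tau' = -c\,d\tau$, and hence $\tau' + c\tau$ is a closed 1-form $\omega$ satisfying $\omega(A) = \phi^{-1} + c$; in particular $\omega(A) \geq \min_N \phi^{-1} + c > 0$ everywhere. -/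
/-- If `τ`, `τ'` are contact forms with Reeb fields `A` and `φA`
and `τ' ∧ dτ' = -c φ⁻¹ τ ∧ dτ` with `c > 0`, then `dτ' = -c dτ`, so
`ω = τ' + cτ` is closed and satisfies `ω(A) = φ⁻¹ + c > 0` everywhere.
Forms are modules over the function ring `N → ℝ`. -/
theorem stmt6 {N : Type*} {Vec Ω1 Ω2 Ω3 : Type*}
    [AddCommGroup Vec] [Module (N → ℝ) Vec]
    [AddCommGroup Ω1] [Module (N → ℝ) Ω1]
    [AddCommGroup Ω2] [Module (N → ℝ) Ω2]
    [AddCommGroup Ω3] [Module (N → ℝ) Ω3]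
    (d1 : Ω1 → Ω2)
    (ι1 : Vec → Ω1 → (N → ℝ)) (ι2 : Vec → Ω2 → Ω1) (ι3 : Vec → Ω3 → Ω2)
    (w11 : Ω1 → Ω1 → Ω2) (w12 : Ω1 → Ω2 → Ω3)
    (τ τ' : Ω1) (A : Vec) (φ : N → ℝ) (hφ : ∀ p, 0 < φ p)
    (c : ℝ) (hc : 0 < c)
    (hτA : ι1 A τ = 1)
    (hιdτ : ι2 A (d1 τ) = 0)
    (hτ'A : ι1 (φ • A) τ' = 1)
    (hιdτ' : ι2 (φ • A) (d1 τ') = 0)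
    (hvol : w12 τ' (d1 τ') = ((fun p => -c * (φ p)⁻¹) : N → ℝ) • w12 τ (d1 τ))
    (hanti : ∀ (a : Ω1) (β : Ω2) (X : Vec),
      ι3 X (w12 a β) = ι1 X a • β - w11 a (ι2 X β))
    (hw0 : ∀ a : Ω1, w11 a (0 : Ω1) = 0)
    (hι3_vec : ∀ (f : N → ℝ) (X : Vec) (ω : Ω3), ι3 (f • X) ω = f • ι3 X ω)
    (hι3_form : ∀ (f : N → ℝ) (X : Vec) (ω : Ω3), ι3 X (f • ω) = f • ι3 X ω)
    (hι1_add : ∀ (X : Vec) (a b : Ω1), ι1 X (a + b) = ι1 X a + ι1 X b)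
    (hι1_smul : ∀ (X : Vec) (f : N → ℝ) (a : Ω1), ι1 X (f • a) = f * ι1 X a)
    (hι1_vec : ∀ (f : N → ℝ) (X : Vec) (a : Ω1), ι1 (f • X) a = f * ι1 X a)
    (hd1_add : ∀ a b : Ω1, d1 (a + b) = d1 a + d1 b)
    (hd1_smul : ∀ (r : ℝ) (a : Ω1),
      d1 (((fun _ => r) : N → ℝ) • a) = ((fun _ => r) : N → ℝ) • d1 a) :
    d1 τ' = ((fun _ => -c) : N → ℝ) • d1 τ ∧
    d1 (τ' + ((fun _ => c) : N → ℝ) • τ) = 0 ∧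
    ι1 A (τ' + ((fun _ => c) : N → ℝ) • τ) = (fun p => (φ p)⁻¹ + c) ∧
    ∀ p, 0 < ι1 A (τ' + ((fun _ => c) : N → ℝ) • τ) p := by

  have h1 : ι3 (φ • A) (w12 τ' (d1 τ')) = d1 τ' := by
    rw [hanti, hτ'A, hιdτ', hw0, one_smul, sub_zero]
  have h2 : ι3 (φ • A) (w12 τ' (d1 τ')) =
      (((fun p => -c * (φ p)⁻¹) : N → ℝ) * φ) • d1 τ := by
    rw [hvol, hι3_form, hι3_vec, hanti, hτA, hιdτ, hw0, one_smul, sub_zero, smul_smul]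
  have hfun : (((fun p => -c * (φ p)⁻¹) : N → ℝ) * φ) = ((fun _ => -c) : N → ℝ) := by
    funext p
    simp [Pi.mul_apply, mul_assoc, inv_mul_cancel₀ (hφ p).ne']
  have hd : d1 τ' = ((fun _ => -c) : N → ℝ) • d1 τ := by
    rw [← h1, h2, hfun]
  have hclosed : d1 (τ' + ((fun _ => c) : N → ℝ) • τ) = 0 := by
    rw [hd1_add, hd1_smul, hd, ← add_smul]
    have : (((fun _ => -c) : N → ℝ) + (fun _ => c)) = 0 := by funext p; simp
    rw [this, zero_smul]
  have hτ'Ainv : ι1 A τ' = fun p => (φ p)⁻¹ := by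
    have h := hτ'A
    rw [hι1_vec] at h
    funext p
    have hp : ι1 A τ' p * φ p = 1 := by
      have := congrFun h p
      simpa [Pi.mul_apply, mul_comm] using this
    exact eq_inv_of_mul_eq_one_left hp
  have hι : ι1 A (τ' + ((fun _ => c) : N → ℝ) • τ) = fun p => (φ p)⁻¹ + c := by
    rw [hι1_add, hι1_smul, hτA, hτ'Ainv, mul_one]
    funext p; simp
  refine ⟨hd, hclosed, hι, ?_⟩
  intro p
  rw [hι]
  exact add_pos (inv_pos.2 (hφ p)) hc
end

section
/- Let $X$ be a compact metric space, $\{A^t\}$ a continuous flow on $X$, $g : X \to \mathbb{R}$ a continuous function, and $\epsilon > 0$. Suppose $\int_X g\, d\mu \geq 1 - 3\epsilon$ for every $A^t$-invariant Borel probability measure $\mu$. Then there exists $T > 0$ such that for all $t \geq T$ and all $p \in X$, the Birkhoff average satisfies $t^{-1}\int_0^t g(A^s(p))\,ds > 1 - 4\epsilon$. -/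
open MeasureTheory

/-!
Suppose the Birkhoff averages of `g` along orbit segments of unbounded length stay `≤ 1 - 4ε`.
The uniform measures on these orbit segments, pushed to `X`, have a weak-* cluster point `μ`
(probability measures on a compact space form a compact space). Shifting an orbit segment of
length `t` by time `r` changes the average of a bounded function `f` by at most
`2 ‖f‖ |r| / t`, so `μ` is invariant under the flow, while `∫ g dμ ≤ 1 - 4ε`, contradicting the
hypothesis on invariant measures.
-/

open Filter Set Topology ProbabilityTheory BoundedContinuousFunction

theorem MapClusterPt.eq_of_tendsto {Y ι : Type*} [TopologicalSpace Y] [T2Space Y] {l : Filter ι}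
    {u : ι → Y} {x y : Y} (hx : MapClusterPt x l u) (hy : Tendsto u l (𝓝 y)) : x = y :=
  eq_of_nhds_neBot (hx.neBot.mono (inf_le_inf_left _ hy))

section Invariance

variable {X : Type*} [TopologicalSpace X] [MeasurableSpace X] [BorelSpace X]
  [HasOuterApproxClosed X]

theorem measurePreserving_of_forall_integral_comp_eq {T : X → X} (hT : Continuous T)
    (μ : Measure X) [IsFiniteMeasure μ] (h : ∀ f : X →ᵇ ℝ, ∫ x, f (T x) ∂μ = ∫ x, f x ∂μ) :
    MeasurePreserving T μ μ := by
  refine ⟨hT.measurable, ext_of_forall_integral_eq_of_IsFiniteMeasure fun f => ?_⟩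
  rw [integral_map hT.aemeasurable f.continuous.aestronglyMeasurable]
  exact h f

theorem MapClusterPt.measurePreserving {ι : Type*} {l : Filter ι} {ν : ι → ProbabilityMeasure X}
    {μ : ProbabilityMeasure X} (hμ : MapClusterPt μ l ν) {T : X → X} (hT : Continuous T)
    (h : ∀ f : X →ᵇ ℝ, Tendsto (fun i => ∫ x, f (T x) ∂ν i - ∫ x, f x ∂ν i) l (𝓝 0)) :
    MeasurePreserving T μ μ := by
  refine measurePreserving_of_forall_integral_comp_eq hT μ fun f => sub_eq_zero.mp ?_
  let fT : X →ᵇ ℝ := f.compContinuous ⟨T, hT⟩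
  have hcont : Continuous fun m : ProbabilityMeasure X => ∫ x, fT x ∂m - ∫ x, f x ∂m :=
    (ProbabilityMeasure.continuous_integral_boundedContinuousFunction fT).sub
      (ProbabilityMeasure.continuous_integral_boundedContinuousFunction f)
  exact (hμ.continuousAt_comp hcont.continuousAt).eq_of_tendsto (h f)

end Invariance

namespace Flow

variable {X : Type*} [TopologicalSpace X] [MeasurableSpace X] [BorelSpace X]
  (ϕ : Flow ℝ X) (p : X) {t : ℝ}

/-- The empirical measure `t⁻¹ ∫₀ᵗ δ_{ϕ s p} ds` (the zero measure when `t ≤ 0`). -/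
noncomputable def orbitMeasure (t : ℝ) : Measure X :=
  (volume[|Ioc 0 t]).map (ϕ · p)

theorem measurable_orbit : Measurable (ϕ · p) :=
  (ϕ.continuous continuous_id continuous_const).measurable

theorem isProbabilityMeasure_orbitMeasure (ht : 0 < t) :
    IsProbabilityMeasure (ϕ.orbitMeasure p t) := by
  have : IsProbabilityMeasure (volume[|Ioc 0 t]) :=
    cond_isProbabilityMeasure_of_finite (by simp [ht]) measure_Ioc_lt_top.ne
  exact Measure.isProbabilityMeasure_map (ϕ.measurable_orbit p).aemeasurable

theorem integral_orbitMeasure (ht : 0 < t) {f : X → ℝ} (hf : Measurable f) :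
    ∫ x, f x ∂ϕ.orbitMeasure p t = t⁻¹ * ∫ s in 0..t, f (ϕ s p) := by
  rw [orbitMeasure, integral_map (ϕ.measurable_orbit p).aemeasurable hf.aestronglyMeasurable,
    ProbabilityTheory.cond, integral_smul_measure, intervalIntegral.integral_of_le ht.le,
    Real.volume_Ioc, sub_zero, ENNReal.toReal_inv, ENNReal.toReal_ofReal ht.le, smul_eq_mul]

theorem abs_integral_comp_sub_integral_orbitMeasure_le (ht : 0 < t) (f : X →ᵇ ℝ) (r : ℝ) :
    |∫ x, f (ϕ r x) ∂ϕ.orbitMeasure p t - ∫ x, f x ∂ϕ.orbitMeasure p t| ≤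
      2 * ‖f‖ * |r| / t := by
  have hII (a b : ℝ) : IntervalIntegrable (fun s => f (ϕ s p)) volume a b :=
    (f.continuous.comp (ϕ.continuous continuous_id continuous_const)).intervalIntegrable a b
  have hbound (a b : ℝ) : |∫ s in a..b, f (ϕ s p)| ≤ ‖f‖ * |b - a| := by
    simpa using intervalIntegral.norm_integral_le_of_norm_le_const
      fun s _ => f.norm_coe_le_norm (ϕ s p)
  have hshift : ∫ s in 0..t, f (ϕ r (ϕ s p)) = ∫ s in r..t + r, f (ϕ s p) := by
    simp_rw [← ϕ.map_add, add_comm r]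
    simpa using intervalIntegral.integral_comp_add_right (fun s => f (ϕ s p)) r (a := 0) (b := t)
  have hfr : Measurable fun x => f (ϕ r x) := (f.continuous.comp (ϕ.continuous_toFun r)).measurable
  rw [ϕ.integral_orbitMeasure p ht hfr,
    ϕ.integral_orbitMeasure p ht f.continuous.measurable, ← mul_sub, hshift,
    intervalIntegral.integral_interval_sub_interval_comm' (hII _ _) (hII _ _) (hII _ _),
    abs_mul, abs_inv, abs_of_pos ht, inv_mul_le_iff₀ ht, mul_div_cancel₀ _ ht.ne']
  calc |(∫ s in t..t + r, f (ϕ s p)) - ∫ s in 0..r, f (ϕ s p)|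
      ≤ ‖f‖ * |t + r - t| + ‖f‖ * |r - 0| :=
        (abs_sub _ _).trans (add_le_add (hbound _ _) (hbound _ _))
    _ = 2 * ‖f‖ * |r| := by ring_nf

theorem tendsto_integral_comp_sub_integral_orbitMeasure {ι : Type*} {l : Filter ι}
    {x : ι → X} {T : ι → ℝ} (hT : Tendsto T l atTop) (f : X →ᵇ ℝ) (r : ℝ) :
    Tendsto (fun i => ∫ y, f (ϕ r y) ∂ϕ.orbitMeasure (x i) (T i) -
      ∫ y, f y ∂ϕ.orbitMeasure (x i) (T i)) l (𝓝 0) := by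
  refine squeeze_zero_norm' ((hT.eventually_gt_atTop 0).mono fun i hi => ?_)
    (by simpa using (tendsto_inv_atTop_zero.comp hT).const_mul (2 * ‖f‖ * |r|))
  simpa [div_eq_mul_inv] using ϕ.abs_integral_comp_sub_integral_orbitMeasure_le (x i) hi f r

end Flow

/-- If every invariant Borel probability measure `μ` of a
continuous flow `A` on a compact metric space satisfies `∫ g dμ ≥ 1 - 3ε`, then
there is `T > 0` such that all Birkhoff averages of `g` over times `t ≥ T`
exceed `1 - 4ε`. -/
theorem stmt10 {X : Type*} [MetricSpace X] [CompactSpace X]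
    [MeasurableSpace X] [BorelSpace X]
    (A : ℝ → X → X)
    (hA0 : ∀ p, A 0 p = p)
    (hAflow : ∀ t s p, A (t + s) p = A t (A s p))
    (hAcont : Continuous fun q : ℝ × X => A q.1 q.2)
    (g : X → ℝ) (hg : Continuous g) (ε : ℝ) (hε : 0 < ε)
    (hinv : ∀ μ : Measure X, IsProbabilityMeasure μ →
      (∀ t : ℝ, MeasurePreserving (A t) μ μ) → 1 - 3 * ε ≤ ∫ x, g x ∂μ) :
    ∃ T > (0:ℝ), ∀ t ≥ T, ∀ p : X,
      1 - 4 * ε < t⁻¹ * ∫ s in (0:ℝ)..t, g (A s p) := by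
  let ϕ : Flow ℝ X := ⟨A, hAcont, hAflow, hA0⟩
  by_contra! hbad
  choose t ht p hp using fun n : ℕ => hbad (n + 1) n.cast_add_one_pos
  have htpos (n : ℕ) : 0 < t n := n.cast_add_one_pos.trans_le (ht n)
  have htop : Tendsto t atTop atTop :=
    tendsto_atTop_mono ht (tendsto_natCast_atTop_atTop.atTop_add tendsto_const_nhds)
  let ν (n : ℕ) : ProbabilityMeasure X :=
    ⟨ϕ.orbitMeasure (p n) (t n), ϕ.isProbabilityMeasure_orbitMeasure (p n) (htpos n)⟩
  obtain ⟨μ, -, hμ⟩ := isCompact_univ.exists_mapClusterPt (f := atTop) (u := ν) (by simp)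
  have hμinv (r : ℝ) : MeasurePreserving (A r) μ μ :=
    hμ.measurePreserving (ϕ.continuous_toFun r)
      (ϕ.tendsto_integral_comp_sub_integral_orbitMeasure htop · r)
  let gb : X →ᵇ ℝ := .mkOfCompact ⟨g, hg⟩
  have hμg : ∫ x, g x ∂(μ : Measure X) ≤ 1 - 4 * ε :=
    (isClosed_le (ProbabilityMeasure.continuous_integral_boundedContinuousFunction gb)
      continuous_const).mem_of_mapClusterPt hμ <| .of_forall fun n =>
        (ϕ.integral_orbitMeasure (p n) (htpos n) hg.measurable).trans_le (hp n)
  linarith [hinv μ inferInstance hμinv]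
end
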